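/- arXiv:2108.03455 — 2 statements merged into one kernel-verified Lean document; each statement's English description precedes it below -/
import Mathlib

section
/- Assume (V, E) contains no directed cycle of negative weight and n ≥ 2. Then for every vertex v reachable from s, D_{2n−3}(v) equals the minimum weight of a directed path from s to v, and D_{2n−3}(v) = +∞ for every vertex v not reachable from s. (This is the case t = n−2, matching the Bellman–Ford algorithm.) -/
/-- `L` is a directed walk from `u` to `v`: a nonempty list of vertices starting at `u`,
ending at `v`, with consecutive vertices joined by edges. Its number of edges is `L.length - 1`. -/
def IsWalk {V : Type} (E : V → V → Prop) (u v : V) (L : List V) : Prop :=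
  L ≠ [] ∧ L.head? = some u ∧ L.getLast? = some v ∧ L.Chain' E

/-- A directed path: a walk with pairwise distinct vertices. -/
def IsPath {V : Type} (E : V → V → Prop) (u v : V) (L : List V) : Prop :=
  IsWalk E u v L ∧ L.Nodup

/-- The weight of a walk: the sum of the weights of its consecutive edges
(the trivial walk has weight 0). -/
def walkWeight {V : Type} (w : V → V → ℝ) (L : List V) : ℝ :=
  ((L.zip L.tail).map fun e => w e.1 e.2).sum

/-- `v` is reachable from `u`. -/
def Reaches {V : Type} (E : V → V → Prop) (u v : V) : Prop :=
  ∃ L, IsWalk E u v L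

/-- BFS level: the minimum number of edges of a directed walk from `s` to `v`. -/
noncomputable def level {V : Type} (E : V → V → Prop) (s v : V) : ℕ :=
  sInf {k | ∃ L, IsWalk E s v L ∧ L.length = k + 1}

/-- The forward pass: `D'(v_j) = min (D(v_j), min over edges (v_i,v_j) with i < j of
`D'(v_i) + w(v_i,v_j))`, computed for `j` in increasing order (over the empty set the
inner minimum is `+∞`, so in particular `D'(v_1) = D(v_1)`). -/
noncomputable def forwardPass (n : ℕ) (E : Fin n → Fin n → Prop) [DecidableRel E]
    (w : Fin n → Fin n → ℝ) (D : Fin n → WithTop ℝ) : Fin n → WithTop ℝ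
  | j =>
    min (D j)
      (((Finset.univ.filter (fun i : Fin n => i < j ∧ E i j)).attach).inf
        (fun i => forwardPass n E w D i.1 + (w i.1 j : WithTop ℝ)))
  termination_by j => j.val
  decreasing_by
    exact (Finset.mem_filter.mp i.2).2.1

/-- The backward pass: `D'(v_j) = min (D(v_j), min over edges (v_i,v_j) with i > j of
`D'(v_i) + w(v_i,v_j))`, computed for `j` in decreasing order (in particular
`D'(v_n) = D(v_n)`). -/
noncomputable def backwardPass (n : ℕ) (E : Fin n → Fin n → Prop) [DecidableRel E]
    (w : Fin n → Fin n → ℝ) (D : Fin n → WithTop ℝ) : Fin n → WithTop ℝ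
  | j =>
    min (D j)
      (((Finset.univ.filter (fun i : Fin n => j < i ∧ E i j)).attach).inf
        (fun i => backwardPass n E w D i.1 + (w i.1 j : WithTop ℝ)))
  termination_by j => n - j.val
  decreasing_by
    have h1 : j.val < i.1.val := (Finset.mem_filter.mp i.2).2.1
    have h2 : i.1.val < n := i.1.isLt
    omega

/-- `Dseq n E w s k` is `D_k` : `D_0(s) = 0`, `D_0 = +∞` elsewhere; `D_1` is the forward
pass of `D_0`; `D_{2k}` is the backward pass of `D_{2k-1}`; `D_{2k+1}` is the forward pass
of `D_{2k}` (for `k ≥ 1`). -/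
noncomputable def Dseq (n : ℕ) (E : Fin n → Fin n → Prop) [DecidableRel E]
    (w : Fin n → Fin n → ℝ) (s : Fin n) : ℕ → Fin n → WithTop ℝ
  | 0 => fun j => if j = s then 0 else ⊤
  | (k + 1) =>
    if k % 2 = 0 then forwardPass n E w (Dseq n E w s k)
    else backwardPass n E w (Dseq n E w s k)

/-!
Every finite value `D_k(v)` is the weight of some walk from `s` to `v`, and without negative
cycles a walk can be shortened to a path of no larger weight, so `D_k(v)` is never below the
minimum path weight, and is `+∞` when `v` is unreachable. Conversely, of the two passes producing
`D_k` and `D_{k+1}`, one goes in the direction of a given edge `(u, v)`, so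
`D_{k+1}(v) ≤ D_k(u) + w(u, v)`, except for a backward edge at `k = 0`, which cannot leave
`s = v_1`. Along a shortest path with `m ≤ n - 1` edges this gives `D_m(v) ≤` its weight, and
the sequence `D_k` is pointwise nonincreasing.
-/

theorem List.exists_eq_append_cons_append_cons_of_not_nodup {α : Type*} {l : List α}
    (h : ¬ l.Nodup) : ∃ x A B C, l = A ++ x :: (B ++ x :: C) := by
  induction l with
  | nil => exact absurd List.nodup_nil h
  | cons a l ih =>
    rw [List.nodup_cons, not_and_or, not_not] at h
    rcases h with ha | hl
    · obtain ⟨B, C, rfl⟩ := List.append_of_mem ha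
      exact ⟨a, [], B, C, rfl⟩
    · obtain ⟨x, A, B, C, rfl⟩ := ih hl
      exact ⟨x, a :: A, B, C, rfl⟩

section Walks

variable {V : Type} {E : V → V → Prop} {w : V → V → ℝ}

theorem walkWeight_singleton (a : V) : walkWeight w [a] = 0 := by
  simp [walkWeight]

theorem walkWeight_cons_cons (a b : V) (L : List V) :
    walkWeight w (a :: b :: L) = w a b + walkWeight w (b :: L) := by
  simp [walkWeight]

theorem walkWeight_append_cons (A : List V) (x : V) (B : List V) :
    walkWeight w (A ++ x :: B) = walkWeight w (A ++ [x]) + walkWeight w (x :: B) := by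
  induction A with
  | nil => simp [walkWeight_singleton]
  | cons a A ih =>
    cases A with
    | nil => simp [walkWeight_cons_cons, walkWeight_singleton]
    | cons b A =>
      simp only [List.cons_append, walkWeight_cons_cons] at ih ⊢
      rw [ih, add_assoc]

theorem walkWeight_append_pair (L : List V) (u v : V) :
    walkWeight w (L ++ [u, v]) = walkWeight w (L ++ [u]) + w u v := by
  rw [walkWeight_append_cons, walkWeight_cons_cons, walkWeight_singleton, add_zero]

theorem isWalk_append_cons {s v x : V} {A B : List V} :
    IsWalk E s v (A ++ x :: B) ↔ IsWalk E s x (A ++ [x]) ∧ IsWalk E x v (x :: B) := by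
  have hhead : (A ++ x :: B).head? = (A ++ [x]).head? := by cases A <;> simp
  have hlast : (A ++ x :: B).getLast? = (x :: B).getLast? :=
    List.getLast?_append_of_ne_nil _ (List.cons_ne_nil _ _)
  unfold IsWalk List.Chain'
  rw [List.isChain_split, hhead, hlast]
  simp
  tauto

theorem isWalk_pair {u v : V} : IsWalk E u v [u, v] ↔ E u v := by
  simp [IsWalk, List.Chain']

theorem isWalk_append_pair {s u v : V} {L : List V} :
    IsWalk E s v (L ++ [u, v]) ↔ IsWalk E s u (L ++ [u]) ∧ E u v := by
  rw [isWalk_append_cons, isWalk_pair]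

theorem IsWalk.exists_eq_append_singleton {s v : V} {L : List V} (h : IsWalk E s v L) :
    ∃ L', L = L' ++ [v] :=
  List.getLast?_eq_some_iff.1 h.2.2.1

theorem IsWalk.exists_isPath_walkWeight_le
    (hcycle : ∀ u L, IsWalk E u u L → 2 ≤ L.length → 0 ≤ walkWeight w L)
    {u v : V} {L : List V} (h : IsWalk E u v L) :
    ∃ M, IsPath E u v M ∧ walkWeight w M ≤ walkWeight w L := by
  induction hlen : L.length using Nat.strong_induction_on generalizing L with
  | _ m ih =>
    by_cases hnd : L.Nodup
    · exact ⟨L, ⟨h, hnd⟩, le_rfl⟩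
    obtain ⟨x, A, B, C, rfl⟩ := List.exists_eq_append_cons_append_cons_of_not_nodup hnd
    obtain ⟨hA, hxv⟩ := isWalk_append_cons.1 h
    rw [← List.cons_append] at hxv
    obtain ⟨hcyc, hC⟩ := isWalk_append_cons.1 hxv
    obtain ⟨M, hM, hMw⟩ :=
      ih _ (by simp at hlen ⊢; omega) (isWalk_append_cons.2 ⟨hA, hC⟩) rfl
    have hcyc_nonneg := hcycle x _ hcyc (by simp)
    have hsplit : walkWeight w (A ++ x :: (B ++ x :: C)) =
        walkWeight w (A ++ [x]) + walkWeight w (x :: B ++ [x]) + walkWeight w (x :: C) := by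
      rw [walkWeight_append_cons, ← List.cons_append, walkWeight_append_cons (x :: B), add_assoc]
    rw [walkWeight_append_cons] at hMw
    exact ⟨M, hM, by linarith⟩

theorem finite_setOf_isPath [Fintype V] (u v : V) : {L | IsPath E u v L}.Finite :=
  (List.finite_length_le V (Fintype.card V)).subset fun _ hL => hL.2.length_le_card

theorem Reaches.exists_isPath_forall_walkWeight_le [Fintype V]
    (hcycle : ∀ u L, IsWalk E u u L → 2 ≤ L.length → 0 ≤ walkWeight w L)
    {u v : V} (h : Reaches E u v) :
    ∃ L, IsPath E u v L ∧ ∀ M, IsWalk E u v M → walkWeight w L ≤ walkWeight w M := by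
  obtain ⟨L₀, hL₀⟩ := h
  obtain ⟨P, hP, -⟩ := hL₀.exists_isPath_walkWeight_le hcycle
  obtain ⟨L, hL, hLmin⟩ :=
    Set.exists_min_image _ (walkWeight w) (finite_setOf_isPath u v) ⟨P, hP⟩
  refine ⟨L, hL, fun M hM => ?_⟩
  obtain ⟨M', hM', hM'w⟩ := hM.exists_isPath_walkWeight_le hcycle
  exact (hLmin M' hM').trans hM'w

end Walks

def IsWalkWeightOrTop {V : Type} (E : V → V → Prop) (w : V → V → ℝ) (s v : V)
    (x : WithTop ℝ) : Prop :=
  x = ⊤ ∨ ∃ L, IsWalk E s v L ∧ x = walkWeight w L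

section WalkWeightOrTop

variable {V : Type} {E : V → V → Prop} {w : V → V → ℝ} {s v : V}

theorem IsWalkWeightOrTop.min {x y : WithTop ℝ} (hx : IsWalkWeightOrTop E w s v x)
    (hy : IsWalkWeightOrTop E w s v y) : IsWalkWeightOrTop E w s v (min x y) := by
  rcases min_choice x y with h | h <;> rw [h] <;> assumption

theorem IsWalkWeightOrTop.finset_inf {ι : Type*} {S : Finset ι} {f : ι → WithTop ℝ}
    (h : ∀ i ∈ S, IsWalkWeightOrTop E w s v (f i)) : IsWalkWeightOrTop E w s v (S.inf f) :=
  Finset.inf_induction (.inl rfl) (fun _ hx _ hy => hx.min hy) h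

theorem IsWalkWeightOrTop.add_edge {u : V} {x : WithTop ℝ} (hx : IsWalkWeightOrTop E w s u x)
    (he : E u v) : IsWalkWeightOrTop E w s v (x + (w u v : WithTop ℝ)) := by
  rcases hx with rfl | ⟨L, hL, rfl⟩
  · exact .inl (WithTop.top_add _)
  obtain ⟨L', rfl⟩ := hL.exists_eq_append_singleton
  refine .inr ⟨L' ++ [u, v], isWalk_append_pair.2 ⟨hL, he⟩, ?_⟩
  rw [walkWeight_append_pair]
  norm_cast

end WalkWeightOrTop

section Passes

variable {n : ℕ} (E : Fin n → Fin n → Prop) [DecidableRel E] (w : Fin n → Fin n → ℝ)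

theorem forwardPass_eq (D : Fin n → WithTop ℝ) (j : Fin n) :
    forwardPass n E w D j = min (D j) ((Finset.univ.filter fun i => i < j ∧ E i j).inf
      fun i => forwardPass n E w D i + (w i j : WithTop ℝ)) := by
  rw [forwardPass]
  exact congrArg (min (D j)) (Finset.inf_attach _ fun i => _ + (w i j : WithTop ℝ))

theorem backwardPass_eq (D : Fin n → WithTop ℝ) (j : Fin n) :
    backwardPass n E w D j = min (D j) ((Finset.univ.filter fun i => j < i ∧ E i j).inf
      fun i => backwardPass n E w D i + (w i j : WithTop ℝ)) := by
  rw [backwardPass]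
  exact congrArg (min (D j)) (Finset.inf_attach _ fun i => _ + (w i j : WithTop ℝ))

theorem forwardPass_le (D : Fin n → WithTop ℝ) (j : Fin n) : forwardPass n E w D j ≤ D j := by
  rw [forwardPass_eq]
  exact min_le_left _ _

theorem backwardPass_le (D : Fin n → WithTop ℝ) (j : Fin n) :
    backwardPass n E w D j ≤ D j := by
  rw [backwardPass_eq]
  exact min_le_left _ _

theorem forwardPass_le_add (D : Fin n → WithTop ℝ) {i j : Fin n} (hij : i < j) (he : E i j) :
    forwardPass n E w D j ≤ forwardPass n E w D i + (w i j : WithTop ℝ) := by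
  rw [forwardPass_eq E w D j]
  exact min_le_of_right_le (Finset.inf_le (by simp [hij, he]))

theorem backwardPass_le_add (D : Fin n → WithTop ℝ) {i j : Fin n} (hij : j < i) (he : E i j) :
    backwardPass n E w D j ≤ backwardPass n E w D i + (w i j : WithTop ℝ) := by
  rw [backwardPass_eq E w D j]
  exact min_le_of_right_le (Finset.inf_le (by simp [hij, he]))

variable (s : Fin n)

theorem Dseq_succ_of_even {k : ℕ} (hk : k % 2 = 0) :
    Dseq n E w s (k + 1) = forwardPass n E w (Dseq n E w s k) := by
  rw [Dseq, if_pos hk]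

theorem Dseq_succ_of_odd {k : ℕ} (hk : k % 2 = 1) :
    Dseq n E w s (k + 1) = backwardPass n E w (Dseq n E w s k) := by
  rw [Dseq, if_neg (by omega)]

theorem Dseq_succ_le (k : ℕ) (j : Fin n) : Dseq n E w s (k + 1) j ≤ Dseq n E w s k j := by
  rcases Nat.mod_two_eq_zero_or_one k with hk | hk
  · rw [Dseq_succ_of_even E w s hk]
    exact forwardPass_le E w _ j
  · rw [Dseq_succ_of_odd E w s hk]
    exact backwardPass_le E w _ j

theorem Dseq_antitone (j : Fin n) : Antitone fun k => Dseq n E w s k j :=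
  antitone_nat_of_succ_le fun k => Dseq_succ_le E w s k j

theorem Dseq_le_add_of_odd {k : ℕ} (hk : k % 2 = 1) {i j : Fin n} (hij : i < j) (he : E i j) :
    Dseq n E w s k j ≤ Dseq n E w s k i + (w i j : WithTop ℝ) := by
  obtain ⟨m, rfl⟩ : ∃ m, k = m + 1 := ⟨k - 1, by omega⟩
  rw [Dseq_succ_of_even E w s (by omega)]
  exact forwardPass_le_add E w _ hij he

theorem Dseq_le_add_of_even {k : ℕ} (hk : k % 2 = 0) (hk0 : k ≠ 0) {i j : Fin n}
    (hij : j < i) (he : E i j) :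
    Dseq n E w s k j ≤ Dseq n E w s k i + (w i j : WithTop ℝ) := by
  obtain ⟨m, rfl⟩ : ∃ m, k = m + 1 := ⟨k - 1, by omega⟩
  rw [Dseq_succ_of_odd E w s (by omega)]
  exact backwardPass_le_add E w _ hij he

theorem Dseq_succ_le_add {k : ℕ} {u v : Fin n} (he : E u v) (h : u < v ∨ v < u ∧ k ≠ 0) :
    Dseq n E w s (k + 1) v ≤ Dseq n E w s k u + (w u v : WithTop ℝ) := by
  obtain ⟨m, hm, hrelax⟩ : ∃ m, (m = k ∨ m = k + 1) ∧
      Dseq n E w s m v ≤ Dseq n E w s m u + (w u v : WithTop ℝ) := by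
    rcases Nat.mod_two_eq_zero_or_one k with hk | hk <;> rcases h with huv | ⟨hvu, hk0⟩
    · exact ⟨k + 1, .inr rfl, Dseq_le_add_of_odd E w s (by omega) huv he⟩
    · exact ⟨k, .inl rfl, Dseq_le_add_of_even E w s hk hk0 hvu he⟩
    · exact ⟨k, .inl rfl, Dseq_le_add_of_odd E w s hk huv he⟩
    · exact ⟨k + 1, .inr rfl, Dseq_le_add_of_even E w s (by omega) (by omega) hvu he⟩
  rcases hm with rfl | rfl
  · exact (Dseq_succ_le E w s m v).trans hrelax
  · exact hrelax.trans (add_le_add_left (Dseq_succ_le E w s k u) _)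

theorem Dseq_le_walkWeight_of_isPath (hs : s.val = 0) {v : Fin n} {L : List (Fin n)}
    (hL : IsPath E s v L) : Dseq n E w s (L.length - 1) v ≤ walkWeight w L := by
  induction L using List.reverseRecOn generalizing v with
  | nil => exact absurd rfl hL.1.1
  | append_singleton M v' ih =>
    obtain rfl : v = v' := by simpa using hL.1.2.2.1.symm
    rcases M.eq_nil_or_concat with rfl | ⟨M, u, rfl⟩
    · obtain rfl : v = s := by simpa using hL.1.2.1
      simp [Dseq, walkWeight_singleton]
    rw [List.concat_eq_append, List.append_assoc, List.singleton_append] at hL ⊢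
    rw [List.concat_eq_append] at ih
    obtain ⟨hwalk, hedge⟩ := isWalk_append_pair.1 hL.1
    have hprefix : IsPath E s u (M ++ [u]) := ⟨hwalk, hL.2.sublist (by simp)⟩
    have huv : u ≠ v := by simpa using hL.2.sublist (List.sublist_append_right M [u, v])
    have hdir : u < v ∨ v < u ∧ (M ++ [u]).length - 1 ≠ 0 := by
      rcases M with _ | ⟨a, M⟩
      · obtain rfl : u = s := by simpa using hwalk.2.1
        left
        rw [Fin.lt_def, hs]
        exact Nat.pos_of_ne_zero fun hv => huv (Fin.ext (hs.trans hv.symm))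
      · exact (lt_or_gt_of_ne huv).imp id fun hvu => ⟨hvu, by simp⟩
    calc Dseq n E w s ((M ++ [u, v]).length - 1) v
        = Dseq n E w s ((M ++ [u]).length - 1 + 1) v := by simp
      _ ≤ Dseq n E w s ((M ++ [u]).length - 1) u + (w u v : WithTop ℝ) :=
        Dseq_succ_le_add E w s hedge hdir
      _ ≤ (walkWeight w (M ++ [u]) : WithTop ℝ) + (w u v : WithTop ℝ) :=
        add_le_add_left (ih hprefix) _
      _ = walkWeight w (M ++ [u, v]) := by
        rw [walkWeight_append_pair]
        norm_cast


theorem forwardPass_isWalkWeightOrTop {D : Fin n → WithTop ℝ}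
    (hD : ∀ j, IsWalkWeightOrTop E w s j (D j)) (j : Fin n) :
    IsWalkWeightOrTop E w s j (forwardPass n E w D j) := by
  induction j using WellFoundedLT.induction with
  | _ j ih =>
    rw [forwardPass_eq]
    refine (hD j).min (IsWalkWeightOrTop.finset_inf fun i hi => ?_)
    obtain ⟨hij, he⟩ := (Finset.mem_filter.1 hi).2
    exact (ih i hij).add_edge he

theorem backwardPass_isWalkWeightOrTop {D : Fin n → WithTop ℝ}
    (hD : ∀ j, IsWalkWeightOrTop E w s j (D j)) (j : Fin n) :
    IsWalkWeightOrTop E w s j (backwardPass n E w D j) := by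
  induction j using WellFoundedGT.induction with
  | _ j ih =>
    rw [backwardPass_eq]
    refine (hD j).min (IsWalkWeightOrTop.finset_inf fun i hi => ?_)
    obtain ⟨hji, he⟩ := (Finset.mem_filter.1 hi).2
    exact (ih i hji).add_edge he

theorem Dseq_isWalkWeightOrTop (k : ℕ) (j : Fin n) :
    IsWalkWeightOrTop E w s j (Dseq n E w s k j) := by
  induction k generalizing j with
  | zero =>
    change IsWalkWeightOrTop E w s j (if j = s then 0 else ⊤)
    split_ifs with hj
    · subst hj
      exact .inr ⟨[j], by simp [IsWalk, List.Chain'], by simp [walkWeight_singleton]⟩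
    · exact .inl rfl
  | succ k ih =>
    rcases Nat.mod_two_eq_zero_or_one k with hk | hk
    · rw [Dseq_succ_of_even E w s hk]
      exact forwardPass_isWalkWeightOrTop E w s ih j
    · rw [Dseq_succ_of_odd E w s hk]
      exact backwardPass_isWalkWeightOrTop E w s ih j

end Passes

theorem stmt2_general (n : ℕ) (E : Fin n → Fin n → Prop) [DecidableRel E]
    (w : Fin n → Fin n → ℝ) (s : Fin n) (hs : s.val = 0)
    (hnonneg : ∀ (u : Fin n) (L : List (Fin n)), IsWalk E u u L → 2 ≤ L.length →
      0 ≤ walkWeight w L)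
    (v : Fin n) :
    (Reaches E s v →
      ∃ L, IsPath E s v L ∧ Dseq n E w s (2 * n - 3) v = (walkWeight w L : WithTop ℝ) ∧
        ∀ M, IsPath E s v M → walkWeight w L ≤ walkWeight w M) ∧
    (¬ Reaches E s v → Dseq n E w s (2 * n - 3) v = ⊤) := by
  refine ⟨fun hv => ?_, fun hv => ?_⟩
  · obtain ⟨L, hL, hLmin⟩ := hv.exists_isPath_forall_walkWeight_le hnonneg
    have hlen : L.length - 1 ≤ 2 * n - 3 := by
      have := hL.2.length_le_card
      rw [Fintype.card_fin] at this
      omega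
    have hupper : Dseq n E w s (2 * n - 3) v ≤ walkWeight w L :=
      (Dseq_antitone E w s v hlen).trans (Dseq_le_walkWeight_of_isPath E w s hs hL)
    refine ⟨L, hL, le_antisymm hupper ?_, fun M hM => hLmin M hM.1⟩
    rcases Dseq_isWalkWeightOrTop E w s (2 * n - 3) v with htop | ⟨M, hM, hDM⟩
    · simp [htop] at hupper
    · rw [hDM]
      exact_mod_cast hLmin M hM
  · rcases Dseq_isWalkWeightOrTop E w s (2 * n - 3) v with htop | ⟨M, hM, -⟩
    · exact htop
    · exact absurd ⟨M, hM⟩ hv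

/-- Assume the directed graph contains no directed cycle of negative
weight and `n ≥ 2`. Then for every vertex `v` reachable from the source `s = v_1`,
`D_{2n-3}(v)` equals the minimum weight of a directed path from `s` to `v`, and
`D_{2n-3}(v) = +∞` for every vertex `v` not reachable from `s`. (Here `V = Fin n` is
enumerated so that BFS levels are nondecreasing and unreachable vertices come after all
reachable ones; this is the case `t = n - 2`, matching the Bellman–Ford algorithm.) -/
theorem stmt2 (n : ℕ) (hn : 2 ≤ n) (E : Fin n → Fin n → Prop) [DecidableRel E]
    (w : Fin n → Fin n → ℝ) (s : Fin n) (hs : s.val = 0)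
    (horder : ∀ i j : Fin n, i < j → Reaches E s i → Reaches E s j →
      level E s i ≤ level E s j)
    (hafter : ∀ i j : Fin n, i < j → Reaches E s j → Reaches E s i)
    (hnonneg : ∀ (u : Fin n) (L : List (Fin n)), IsWalk E u u L → 2 ≤ L.length →
      0 ≤ walkWeight w L)
    (v : Fin n) :
    (Reaches E s v →
      ∃ L, IsPath E s v L ∧ Dseq n E w s (2 * n - 3) v = (walkWeight w L : WithTop ℝ) ∧
        ∀ M, IsPath E s v M → walkWeight w L ≤ walkWeight w M) ∧
    (¬ Reaches E s v → Dseq n E w s (2 * n - 3) v = ⊤) :=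
  stmt2_general n E w s hs hnonneg v
end

section
/- For every integer t ≥ 0 and every vertex v, every directed walk from s to v having at most ℓ(v) + t edges contains at most t edges (x, y) with ℓ(y) ≤ ℓ(x). -/
/-
Along a walk the BFS level rises by at most one per edge, and does not rise at all across an
edge `(x, y)` with `ℓ(y) ≤ ℓ(x)`. Hence a walk from `s` to `v` with `b` such edges has at least
`ℓ(v) + b` edges, and `ℓ(v) + b ≤ ℓ(v) + t` gives `b ≤ t`.
-/

theorem IsWalk.concat {V : Type} {E : V → V → Prop} {u v w : V} {L : List V}
    (hL : IsWalk E u v L) (hvw : E v w) : IsWalk E u w (L ++ [w]) := by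
  obtain ⟨hne, hhead, hlast, hchain⟩ := hL
  refine ⟨by simp, by rwa [List.head?_append_of_ne_nil _ hne], by simp, ?_⟩
  refine hchain.append (List.isChain_singleton w) ?_
  rw [hlast]
  simp [hvw]

theorem Reaches.tail {V : Type} {E : V → V → Prop} {s u v : V}
    (hu : Reaches E s u) (huv : E u v) : Reaches E s v :=
  let ⟨L, hL⟩ := hu
  ⟨L ++ [v], hL.concat huv⟩

theorem isWalk_singleton {V : Type} (E : V → V → Prop) (u : V) : IsWalk E u u [u] :=
  ⟨List.cons_ne_nil u [], rfl, rfl, List.isChain_singleton u⟩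

theorem level_self {V : Type} (E : V → V → Prop) (s : V) : level E s s = 0 :=
  Nat.sInf_eq_zero.2 <| Or.inl (show ∃ L, IsWalk E s s L ∧ L.length = 0 + 1 from
    ⟨[s], isWalk_singleton E s, rfl⟩)

theorem exists_isWalk_length_eq_level {V : Type} {E : V → V → Prop} {s v : V}
    (hv : Reaches E s v) : ∃ L, IsWalk E s v L ∧ L.length = level E s v + 1 := by
  obtain ⟨L, hL⟩ := hv
  have hlen : L.length = L.length - 1 + 1 := by
    have := List.length_pos_iff.2 hL.1
    omega
  exact Nat.sInf_mem (s := {k | ∃ L, IsWalk E s v L ∧ L.length = k + 1}) ⟨_, L, hL, hlen⟩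

theorem level_le_level_add_one {V : Type} {E : V → V → Prop} {s u v : V}
    (hu : Reaches E s u) (huv : E u v) : level E s v ≤ level E s u + 1 := by
  obtain ⟨L, hL, hlen⟩ := exists_isWalk_length_eq_level hu
  exact Nat.sInf_le ⟨L ++ [v], hL.concat huv, by simp [hlen]⟩

theorem level_getLast_add_countP_le {V : Type} {E : V → V → Prop} {s : V} :
    ∀ {u : V} {L : List V}, Reaches E s u → (u :: L).IsChain E →
      level E s ((u :: L).getLast (List.cons_ne_nil u L)) +
          ((u :: L).zip L).countP (fun e => decide (level E s e.2 ≤ level E s e.1)) ≤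
        level E s u + L.length
  | _, [], _, _ => by simp
  | u, w :: L, hu, hchain => by
    obtain ⟨huw, hchain⟩ := List.isChain_cons_cons.1 hchain
    have ih := level_getLast_add_countP_le (hu.tail huw) hchain
    have hstep := level_le_level_add_one hu huw
    rw [List.getLast_cons_cons, List.zip_cons_cons, List.countP_cons, List.length_cons]
    split_ifs with hback
    · simp only [decide_eq_true_eq] at hback
      omega
    · omega

theorem stmt5_general (V : Type) (E : V → V → Prop) (s : V)
    (t : ℕ) (v : V) (L : List V) (hL : IsWalk E s v L)
    (hlen : L.length ≤ level E s v + t + 1) :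
    (L.zip L.tail).countP (fun e => decide (level E s e.2 ≤ level E s e.1)) ≤ t := by
  obtain ⟨hne, hhead, hlast, hchain⟩ := hL
  obtain ⟨u, L, rfl⟩ := List.exists_cons_of_ne_nil hne
  obtain rfl : s = u := by simpa using hhead.symm
  have hv : (s :: L).getLast hne = v := by simpa [List.getLast?_eq_some_getLast hne] using hlast
  have key := level_getLast_add_countP_le ⟨[s], isWalk_singleton E s⟩ hchain
  rw [hv, level_self] at key
  simp only [List.tail_cons, List.length_cons] at hlen ⊢
  omega

/-- For every integer `t ≥ 0` and every vertex `v`, every directed walk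
from `s` to `v` having at most `ℓ(v) + t` edges contains at most `t` edges `(x, y)` with
`ℓ(y) ≤ ℓ(x)`. (A walk given by a list `L` has `L.length - 1` edges.) -/
theorem stmt5 (V : Type) [Fintype V] (E : V → V → Prop) (s : V)
    (t : ℕ) (v : V) (L : List V) (hL : IsWalk E s v L)
    (hlen : L.length ≤ level E s v + t + 1) :
    (L.zip L.tail).countP (fun e => decide (level E s e.2 ≤ level E s e.1)) ≤ t :=
  stmt5_general V E s t v L hL hlen
end
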